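/- arXiv:1309.7731 — 4 statements merged into one kernel-verified Lean document; each statement's English description precedes it below -/
import Mathlib

section
/- For the finite-horizon closed-loop system x₁ = D₀w₀, x_{t+1} = (A_t + B_tK_t)x_t + D_tw_t (t = 1,...,N−1) with each D_t invertible, the linear map F(K) from the disturbance trajectory w = (w₀,...,w_{N−1}) to the state trajectory x = (x₁,...,x_N) is invertible, and its inverse is the block-bidiagonal matrix with diagonal blocks D_t⁻¹ and subdiagonal blocks −D_t⁻¹(A_t + B_tK_t); in particular F(K)⁻¹ is an affine function of the feedback matrices K = (K₁,...,K_{N−1}). -/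
/-- The closed-loop dynamics matrix `Ã_t = A_t + B_t K_t`. -/
noncomputable def Atil {n nu : ℕ} (A : ℕ → Matrix (Fin n) (Fin n) ℝ)
    (B : ℕ → Matrix (Fin n) (Fin nu) ℝ) (K : ℕ → Matrix (Fin nu) (Fin n) ℝ)
    (t : ℕ) : Matrix (Fin n) (Fin n) ℝ :=
  A t + B t * K t

/-- `prodChain Ã s t = Ã s * Ã (s-1) * ⋯ * Ã (t+1)` (empty product `1` when `s ≤ t`). -/
noncomputable def prodChain {n : ℕ} (T : ℕ → Matrix (Fin n) (Fin n) ℝ) (s t : ℕ) :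
    Matrix (Fin n) (Fin n) ℝ :=
  ((List.range (s - t)).map (fun k => T (s - k))).prod

/-- The disturbance-to-state trajectory map `F(K)`: block lower triangular, with
block row `s` (state `x_{s+1}`) and block column `t` (disturbance `w_t`) equal to
`Ã_s Ã_{s-1} ⋯ Ã_{t+1} D_t` for `t ≤ s`, zero otherwise.  (Time indices are 0-based:
`x_1 = D_0 w_0`, `x_{t+1} = Ã_t x_t + D_t w_t` for `1 ≤ t ≤ N−1`.) -/
noncomputable def Fmap {N n nu : ℕ} (A : ℕ → Matrix (Fin n) (Fin n) ℝ)
    (B : ℕ → Matrix (Fin n) (Fin nu) ℝ) (D : ℕ → Matrix (Fin n) (Fin n) ℝ)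
    (K : ℕ → Matrix (Fin nu) (Fin n) ℝ) :
    Matrix (Fin N × Fin n) (Fin N × Fin n) ℝ :=
  fun p q =>
    if (q.1 : ℕ) ≤ (p.1 : ℕ) then
      (prodChain (Atil A B K) (p.1 : ℕ) (q.1 : ℕ) * D (q.1 : ℕ)) p.2 q.2
    else 0

/-- The block-bidiagonal matrix with diagonal blocks `D_t⁻¹` and subdiagonal blocks
`−D_t⁻¹ (A_t + B_t K_t)`. -/
noncomputable def Gmap {N n nu : ℕ} (A : ℕ → Matrix (Fin n) (Fin n) ℝ)
    (B : ℕ → Matrix (Fin n) (Fin nu) ℝ) (D : ℕ → Matrix (Fin n) (Fin n) ℝ)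
    (K : ℕ → Matrix (Fin nu) (Fin n) ℝ) :
    Matrix (Fin N × Fin n) (Fin N × Fin n) ℝ :=
  fun p q =>
    if (p.1 : ℕ) = (q.1 : ℕ) then (D (p.1 : ℕ))⁻¹ p.2 q.2
    else if (q.1 : ℕ) + 1 = (p.1 : ℕ) then
      (-((D (p.1 : ℕ))⁻¹ * Atil A B K (p.1 : ℕ))) p.2 q.2
    else 0

lemma prodChain_self {n : ℕ} (T : ℕ → Matrix (Fin n) (Fin n) ℝ) (s : ℕ) :
    prodChain T s s = 1 := by simp [prodChain]

lemma prodChain_succ {n : ℕ} (T : ℕ → Matrix (Fin n) (Fin n) ℝ) {s t : ℕ} (h : t < s) :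
    prodChain T s t = T s * prodChain T (s - 1) t := by
  obtain ⟨m, rfl⟩ : ∃ m, s = m + 1 := ⟨s - 1, (Nat.succ_pred_eq_of_pos (Nat.pos_of_ne_zero (by omega))).symm⟩
  have ht : t ≤ m := Nat.lt_succ_iff.mp h
  unfold prodChain
  rw [show m + 1 - t = (m - t) + 1 by omega, List.range_succ_eq_map]
  simp [Nat.succ_sub_succ, Function.comp_def]

lemma GF {N n nu : ℕ} (A : ℕ → Matrix (Fin n) (Fin n) ℝ)
    (B : ℕ → Matrix (Fin n) (Fin nu) ℝ) (D : ℕ → Matrix (Fin n) (Fin n) ℝ)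
    (hD : ∀ t, IsUnit (D t).det) (K : ℕ → Matrix (Fin nu) (Fin n) ℝ) :
    Gmap (N := N) A B D K * Fmap (N := N) A B D K = 1 := by
  ext ⟨p₁, p₂⟩ ⟨q₁, q₂⟩
  rw [Matrix.mul_apply, Fintype.sum_prod_type]
  have key : ∀ r₁ : Fin N,
      (∑ r₂ : Fin n, Gmap (N := N) A B D K (p₁, p₂) (r₁, r₂) *
        Fmap (N := N) A B D K (r₁, r₂) (q₁, q₂)) =
      if (p₁ : ℕ) = (r₁ : ℕ) ∧ (q₁ : ℕ) ≤ (r₁ : ℕ) then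
        (((D (p₁ : ℕ))⁻¹ * (prodChain (Atil A B K) (r₁ : ℕ) (q₁ : ℕ) * D (q₁ : ℕ))) p₂ q₂)
      else if (r₁ : ℕ) + 1 = (p₁ : ℕ) ∧ (q₁ : ℕ) ≤ (r₁ : ℕ) then
        ((-((D (p₁ : ℕ))⁻¹ * Atil A B K (p₁ : ℕ)) *
          (prodChain (Atil A B K) (r₁ : ℕ) (q₁ : ℕ) * D (q₁ : ℕ))) p₂ q₂)
      else 0 := by
    intro r₁
    by_cases h1 : (p₁ : ℕ) = (r₁ : ℕ)
    · by_cases h2 : (q₁ : ℕ) ≤ (r₁ : ℕ)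
      · rw [if_pos ⟨h1, h2⟩]
        simp only [Gmap, Fmap, h1, h2, if_true, Matrix.mul_apply]
      · simp [Gmap, Fmap, h1, h2]
    · by_cases h3 : (r₁ : ℕ) + 1 = (p₁ : ℕ)
      · by_cases h2 : (q₁ : ℕ) ≤ (r₁ : ℕ)
        · rw [if_neg (by omega), if_pos ⟨h3, h2⟩]
          simp only [Gmap, Fmap, h1, h2, h3, if_true, if_false, Matrix.mul_apply]
        · simp [Gmap, Fmap, h1, h2, h3]
      · simp [Gmap, Fmap, h1, h3]
  simp only [key]
  rcases lt_trichotomy (p₁ : ℕ) (q₁ : ℕ) with hpq | hpq | hpq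
  · rw [Finset.sum_eq_zero, Matrix.one_apply_ne (by simp [Prod.ext_iff, Fin.ext_iff]; omega)]
    intro r₁ _
    rw [if_neg (by omega), if_neg (by omega)]
  · have hq : p₁ = q₁ := Fin.ext hpq
    subst hq
    rw [Finset.sum_eq_single p₁
        (fun r₁ _ hr => by
          rw [if_neg (by simp [Fin.ext_iff] at hr ⊢; omega), if_neg (by omega)])
        (fun h => absurd (Finset.mem_univ _) h)]
    rw [if_pos ⟨rfl, le_refl _⟩, prodChain_self, one_mul,
      Matrix.nonsing_inv_mul _ (hD _)]
    by_cases h : p₂ = q₂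
    · simp [h, Matrix.one_apply]
    · simp [h, Matrix.one_apply, Prod.ext_iff]
  · have hp1 : 1 ≤ (p₁ : ℕ) := by omega
    have hmlt : (p₁ : ℕ) - 1 < N := by omega
    rw [Finset.sum_eq_add p₁ ⟨(p₁ : ℕ) - 1, hmlt⟩ (by simp [Fin.ext_iff]; omega)
        (fun r₁ _ hr => by
          rw [if_neg (by simp [Fin.ext_iff] at hr ⊢; omega),
            if_neg (by simp [Fin.ext_iff] at hr ⊢; omega)])
        (fun h => absurd (Finset.mem_univ _) h)
        (fun h => absurd (Finset.mem_univ _) h)]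
    rw [if_pos ⟨rfl, by omega⟩, if_neg (by simp; omega),
      if_pos ⟨by simp; omega, by simp; omega⟩]
    have hchain : prodChain (Atil A B K) (p₁ : ℕ) (q₁ : ℕ) =
        Atil A B K (p₁ : ℕ) * prodChain (Atil A B K) ((p₁ : ℕ) - 1) (q₁ : ℕ) :=
      prodChain_succ _ hpq
    rw [Matrix.one_apply_ne (by simp [Prod.ext_iff, Fin.ext_iff]; omega)]
    have hbv : ((⟨(p₁ : ℕ) - 1, hmlt⟩ : Fin N) : ℕ) = (p₁ : ℕ) - 1 := rfl
    rw [hbv, hchain]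
    simp only [Matrix.neg_mul, Matrix.neg_apply, mul_assoc]
    ring

lemma Gmap_affine {N n nu : ℕ} (A : ℕ → Matrix (Fin n) (Fin n) ℝ)
    (B : ℕ → Matrix (Fin n) (Fin nu) ℝ) (D : ℕ → Matrix (Fin n) (Fin n) ℝ)
    (K₁ K₂ : ℕ → Matrix (Fin nu) (Fin n) ℝ) (θ : ℝ) :
    Gmap (N := N) A B D (fun t => θ • K₁ t + (1 - θ) • K₂ t) =
      θ • Gmap (N := N) A B D K₁ + (1 - θ) • Gmap (N := N) A B D K₂ := by
  have hA : ∀ t : ℕ, Atil A B (fun t => θ • K₁ t + (1 - θ) • K₂ t) t =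
      θ • Atil A B K₁ t + (1 - θ) • Atil A B K₂ t := by
    intro t
    simp only [Atil, Matrix.mul_add, Matrix.mul_smul, smul_add]
    module
  ext ⟨p₁, p₂⟩ ⟨q₁, q₂⟩
  simp only [Gmap, Matrix.add_apply, Matrix.smul_apply, smul_eq_mul]
  split_ifs with h1 h2
  · ring
  · rw [hA]
    simp only [Matrix.mul_add, Matrix.mul_smul, Matrix.neg_apply, Matrix.add_apply,
      Matrix.smul_apply, smul_eq_mul]
    ring
  · ring

/-- With each `D_t` invertible, the disturbance-to-state map `F(K)` is
invertible, its inverse is the block-bidiagonal matrix `G(K)` with diagonal blocks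
`D_t⁻¹` and subdiagonal blocks `−D_t⁻¹(A_t + B_tK_t)`, and `K ↦ F(K)⁻¹` is an affine
function of the feedback matrices. -/
theorem stmt4 {N n nu : ℕ} (A : ℕ → Matrix (Fin n) (Fin n) ℝ)
    (B : ℕ → Matrix (Fin n) (Fin nu) ℝ) (D : ℕ → Matrix (Fin n) (Fin n) ℝ)
    (hD : ∀ t, IsUnit (D t).det) (K : ℕ → Matrix (Fin nu) (Fin n) ℝ) :
    IsUnit (Fmap (N := N) A B D K).det ∧
    (Fmap (N := N) A B D K)⁻¹ = Gmap (N := N) A B D K ∧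
    (∀ (K₁ K₂ : ℕ → Matrix (Fin nu) (Fin n) ℝ) (θ : ℝ),
      (Fmap (N := N) A B D (fun t => θ • K₁ t + (1 - θ) • K₂ t))⁻¹ =
        θ • (Fmap (N := N) A B D K₁)⁻¹ + (1 - θ) • (Fmap (N := N) A B D K₂)⁻¹) := by
  refine ⟨Matrix.isUnit_det_of_left_inverse (GF A B D hD K),
    Matrix.inv_eq_left_inv (GF A B D hD K), ?_⟩
  intro K₁ K₂ θ
  rw [Matrix.inv_eq_left_inv (GF A B D hD _), Matrix.inv_eq_left_inv (GF A B D hD K₁),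
    Matrix.inv_eq_left_inv (GF A B D hD K₂)]
  exact Gmap_affine A B D K₁ K₂ θ
end

section
/- If f : ℝ^m → ℝ is a convex function that is absolutely symmetric (invariant under permutations and sign changes of coordinates), and X ↦ M(X) is an affine map from ℝ^{p×q} into the space of m×m real matrices, then the function X ↦ f(σ(M(X))), where σ(M(X)) is the vector of singular values, is convex. -/
/-- Singular values of a square real matrix (unordered):
square roots of the eigenvalues of `Mᵀ * M`. -/
noncomputable def svals {m : ℕ} (M : Matrix (Fin m) (Fin m) ℝ) : Fin m → ℝ :=
  fun i => Real.sqrt ((show (M.transpose * M).IsHermitian by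
    simpa [Matrix.conjTranspose_eq_transpose_of_trivial] using Matrix.isHermitian_conjTranspose_mul_self M).eigenvalues i)

/-- Singular values arranged in decreasing order: `svDesc M 0` is the largest. -/
noncomputable def svDesc {m : ℕ} (M : Matrix (Fin m) (Fin m) ℝ) : Fin m → ℝ :=
  fun i => svals M (Tuple.sort (svals M) i.rev)

/-!
Lewis' argument. Take an SVD `A = U₀ diag σ(A) V₀ᵀ`. For orthogonal `U, V` the diagonal of
`Uᵀ A V` is `(P ⊙ Q) σ(A)` with `P = Uᵀ U₀`, `Q = Vᵀ V₀` orthogonal. Entrywise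
`|P ⊙ Q| ≤ (P ⊙ P + Q ⊙ Q) / 2`, a doubly stochastic matrix, so by Birkhoff's theorem this diagonal
lies in the convex hull of the signed permutations of `σ(A)`, whence `f (diag (Uᵀ A V)) ≤ f σ(A)`.
Now diagonalise `W = a A + (1 - a) B` by `U, V`: then
`σ(W) = a diag (Uᵀ A V) + (1 - a) diag (Uᵀ B V)` and convexity of `f` gives
`f σ(W) ≤ a f σ(A) + (1 - a) f σ(B)`.
-/

open Matrix

lemma diag_mul_diagonal_mul_transpose {ι α : Type*} [Fintype ι] [DecidableEq ι] [CommSemiring α]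
    (P Q : Matrix ι ι α) (s : ι → α) : (P * diagonal s * Qᵀ).diag = (P ⊙ Q) *ᵥ s := by
  ext i
  rw [diag_apply, mul_apply]
  simp only [mul_diagonal, transpose_apply, mulVec, dotProduct, hadamard, of_apply, mul_right_comm]

section Orthogonal

variable {ι : Type*} [Fintype ι]

lemma inner_toLp_col_col (B : Matrix ι ι ℝ) (i j : ι) :
    inner ℝ (WithLp.toLp 2 (B.col i)) (WithLp.toLp 2 (B.col j)) = (Bᵀ * B) i j := by
  simp [PiLp.inner_apply, mul_apply, mul_comm]

variable [DecidableEq ι]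

lemma exists_orthogonal_mul_diagonal_eq {B : Matrix ι ι ℝ} {s : ι → ℝ}
    (hB : Bᵀ * B = diagonal fun j => s j ^ 2) :
    ∃ U ∈ orthogonalGroup ι ℝ, U * diagonal s = B := by
  set u : ι → EuclideanSpace ℝ ι := fun j => (s j)⁻¹ • WithLp.toLp 2 (B.col j)
  have hu : Orthonormal ℝ ({j | s j ≠ 0}.domRestrict u) := by
    rw [orthonormal_iff_ite]
    rintro ⟨i, hi⟩ ⟨j, -⟩
    simp only [Set.domRestrict_apply, u, real_inner_smul_left, real_inner_smul_right,
      inner_toLp_col_col, hB, diagonal_apply, Subtype.mk.injEq]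
    split_ifs with hij
    · subst hij
      field_simp [show s i ≠ 0 from hi]
    · simp
  obtain ⟨b, hb⟩ := hu.exists_orthonormalBasis_extension_of_card_eq (by simp)
  refine ⟨(EuclideanSpace.basisFun ι ℝ).toBasis.toMatrix b.toBasis,
    (EuclideanSpace.basisFun ι ℝ).toMatrix_orthonormalBasis_mem_unitary b, ?_⟩
  ext i j
  rw [mul_diagonal, Module.Basis.toMatrix_apply]
  by_cases hj : s j = 0
  · have hcol : B.col j = 0 := by
      have := inner_toLp_col_col B j j
      rw [hB, diagonal_apply_eq, hj, zero_pow two_ne_zero, real_inner_self_eq_norm_sq] at this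
      simpa using this
    simpa [hj] using (congrFun hcol i).symm
  · rw [OrthonormalBasis.coe_toBasis, hb j hj]
    simp [u]
    field_simp

lemma hadamard_self_mem_doublyStochastic {P : Matrix ι ι ℝ} (hP : P ∈ orthogonalGroup ι ℝ) :
    P ⊙ P ∈ doublyStochastic ℝ ι := by
  rw [mem_doublyStochastic_iff_sum]
  refine ⟨fun i j => mul_self_nonneg _, fun i => ?_, fun j => ?_⟩
  · simpa [mul_apply] using congr_fun₂ ((mem_orthogonalGroup_iff _ _).1 hP) i i
  · simpa [mul_apply] using congr_fun₂ ((mem_orthogonalGroup_iff' _ _).1 hP) j j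

end Orthogonal

lemma exists_svd {m : ℕ} (A : Matrix (Fin m) (Fin m) ℝ) :
    ∃ U ∈ orthogonalGroup (Fin m) ℝ, ∃ V ∈ orthogonalGroup (Fin m) ℝ,
      Uᵀ * A * V = diagonal (svals A) := by
  have hH : (Aᵀ * A).IsHermitian := by
    simpa [conjTranspose_eq_transpose_of_trivial] using isHermitian_conjTranspose_mul_self A
  set V := (hH.eigenvectorUnitary : Matrix (Fin m) (Fin m) ℝ)
  have hAV : (A * V)ᵀ * (A * V) = diagonal fun j => svals A j ^ 2 := by
    have := hH.conjStarAlgAut_star_eigenvectorUnitary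
    simp only [Unitary.conjStarAlgAut_star_apply, RCLike.ofReal_real_eq_id,
      star_eq_conjTranspose, conjTranspose_eq_transpose_of_trivial] at this
    rw [transpose_mul, mul_assoc, ← mul_assoc Aᵀ, ← mul_assoc, this]
    congr 1
    funext j
    exact (Real.sq_sqrt (eigenvalues_conjTranspose_mul_self_nonneg A j)).symm
  obtain ⟨U, hU, hUAV⟩ := exists_orthogonal_mul_diagonal_eq hAV
  refine ⟨U, hU, V, hH.eigenvectorUnitary.2, ?_⟩
  rw [mul_assoc, ← hUAV, ← mul_assoc, (mem_orthogonalGroup_iff' _ _).1 hU, one_mul]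

section SignedPerms

variable {ι : Type*}

def signedPerms (s : ι → ℝ) : Set (ι → ℝ) :=
  {y | ∃ (e : Equiv.Perm ι) (ε : ι → ℝ), (∀ i, ε i = 1 ∨ ε i = -1) ∧ y = fun i => ε i * s (e i)}

lemma ConvexOn.le_of_mem_convexHull_signedPerms {f : (ι → ℝ) → ℝ} (hf : ConvexOn ℝ Set.univ f)
    (hsym : ∀ (e : Equiv.Perm ι) (ε : ι → ℝ), (∀ i, ε i = 1 ∨ ε i = -1) →
      ∀ x : ι → ℝ, f (fun i => ε i * x (e i)) = f x)
    {s x : ι → ℝ} (hx : x ∈ convexHull ℝ (signedPerms s)) : f x ≤ f s := by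
  obtain ⟨_, ⟨e, ε, hε, rfl⟩, hfx⟩ := hf.exists_ge_of_mem_convexHull (Set.subset_univ _) hx
  exact hfx.trans_eq (hsym e ε hε s)

lemma mul_comp_perm_mem_convexHull_signedPerms [Finite ι] (s : ι → ℝ) (e : Equiv.Perm ι)
    {t : ι → ℝ} (ht : ∀ i, |t i| ≤ 1) :
    (fun i => t i * s (e i)) ∈ convexHull ℝ (signedPerms s) := by
  -- the box `∏ i, [-|s (e i)|, |s (e i)|]` is the convex hull of its vertices
  have hvert : Set.univ.pi (fun i => ({s (e i), -s (e i)} : Set ℝ)) ⊆ signedPerms s := by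
    intro y hy
    refine ⟨e, fun i => if y i = s (e i) then 1 else -1,
      fun i => by dsimp only; split_ifs <;> simp, funext fun i => ?_⟩
    dsimp only
    split_ifs with h
    · rw [h, one_mul]
    · rcases hy i (Set.mem_univ i) with h' | h'
      · exact absurd h' h
      · rw [Set.mem_singleton_iff.1 h', neg_one_mul]
  refine convexHull_mono hvert ?_
  rw [convexHull_pi]
  intro i _
  change t i * s (e i) ∈ convexHull ℝ {s (e i), -s (e i)}
  rw [convexHull_pair]
  obtain ⟨h₁, h₂⟩ := abs_le.1 (ht i)
  exact ⟨(1 + t i) / 2, (1 - t i) / 2, by linarith, by linarith, by ring,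
    by simp only [smul_eq_mul]; ring⟩

variable [Fintype ι] [DecidableEq ι]

lemma mulVec_mem_convexHull_signedPerms {C D : Matrix ι ι ℝ} (hD : D ∈ doublyStochastic ℝ ι)
    (hCD : ∀ i j, |C i j| ≤ D i j) (s : ι → ℝ) :
    C *ᵥ s ∈ convexHull ℝ (signedPerms s) := by
  -- `C = D ⊙ t` with `|t| ≤ 1`; where `D i j = 0` also `C i j = 0`, so the junk `C i j / 0 = 0`
  -- is harmless. Birkhoff's theorem then writes `C *ᵥ s` as a convex combination over `σ` of
  -- the vectors `t i (σ i) * s (σ i)`.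
  set t : ι → ι → ℝ := fun i j => C i j / D i j
  have ht : ∀ i j, |t i j| ≤ 1 := fun i j => by
    rw [abs_div, abs_of_nonneg ((hCD i j).trans' (abs_nonneg _))]
    exact div_le_one_of_le₀ (hCD i j) ((hCD i j).trans' (abs_nonneg _))
  have hC : ∀ i j, C i j = D i j * t i j := fun i j => by
    rcases eq_or_ne (D i j) 0 with h | h
    · simpa [h] using hCD i j
    · simp only [t]; field_simp
  obtain ⟨w, hw₀, hw₁, hwD⟩ := exists_eq_sum_perm_of_mem_doublyStochastic hD
  have hCs : C *ᵥ s = ∑ σ, w σ • fun i => t i (σ i) * s (σ i) := by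
    ext i
    calc (C *ᵥ s) i = ∑ j, ∑ σ, w σ * (σ.permMatrix ℝ i j * (t i j * s j)) := by
          simp only [mulVec, dotProduct, hC, ← hwD, Matrix.sum_apply, Matrix.smul_apply,
            smul_eq_mul, Finset.sum_mul, mul_assoc]
      _ = ∑ σ, w σ * (t i (σ i) * s (σ i)) := by
          rw [Finset.sum_comm]
          simp [Equiv.Perm.permMatrix, PEquiv.toMatrix_apply]
      _ = (∑ σ, w σ • fun i => t i (σ i) * s (σ i)) i := by simp
  rw [hCs]
  exact (convex_convexHull ℝ _).sum_mem (fun σ _ => hw₀ σ) hw₁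
    fun σ _ => mul_comp_perm_mem_convexHull_signedPerms s σ fun i => ht i (σ i)

lemma hadamard_mulVec_mem_convexHull_signedPerms {P Q : Matrix ι ι ℝ}
    (hP : P ∈ orthogonalGroup ι ℝ) (hQ : Q ∈ orthogonalGroup ι ℝ) (s : ι → ℝ) :
    (P ⊙ Q) *ᵥ s ∈ convexHull ℝ (signedPerms s) := by
  refine mulVec_mem_convexHull_signedPerms (D := (1 / 2 : ℝ) • (P ⊙ P) + (1 / 2 : ℝ) • (Q ⊙ Q))
    (convex_doublyStochastic (hadamard_self_mem_doublyStochastic hP)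
      (hadamard_self_mem_doublyStochastic hQ) (by norm_num) (by norm_num) (by norm_num))
    (fun i j => ?_) s
  have := two_mul_le_add_sq |P i j| |Q i j|
  simp only [hadamard, Matrix.add_apply, Matrix.smul_apply, of_apply, smul_eq_mul,
    abs_mul] at this ⊢
  rw [sq_abs, sq_abs] at this
  nlinarith

end SignedPerms

lemma ConvexOn.apply_diag_le_apply_svals {m : ℕ} {f : (Fin m → ℝ) → ℝ}
    (hf : ConvexOn ℝ Set.univ f)
    (hsym : ∀ (e : Equiv.Perm (Fin m)) (ε : Fin m → ℝ), (∀ i, ε i = 1 ∨ ε i = -1) →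
      ∀ x : Fin m → ℝ, f (fun i => ε i * x (e i)) = f x)
    (A : Matrix (Fin m) (Fin m) ℝ) {U V : Matrix (Fin m) (Fin m) ℝ}
    (hU : U ∈ orthogonalGroup (Fin m) ℝ) (hV : V ∈ orthogonalGroup (Fin m) ℝ) :
    f (Uᵀ * A * V).diag ≤ f (svals A) := by
  obtain ⟨U₀, hU₀, V₀, hV₀, hA⟩ := exists_svd A
  have hA' : U₀ * diagonal (svals A) * V₀ᵀ = A := by
    rw [← hA, mul_assoc, mul_assoc, (mem_orthogonalGroup_iff _ _).1 hV₀, mul_one, ← mul_assoc,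
      (mem_orthogonalGroup_iff _ _).1 hU₀, one_mul]
  have hUAV : Uᵀ * A * V = (Uᵀ * U₀) * diagonal (svals A) * (Vᵀ * V₀)ᵀ := by
    conv_lhs => rw [← hA']
    simp only [transpose_mul, transpose_transpose, mul_assoc]
  rw [hUAV, diag_mul_diagonal_mul_transpose]
  exact hf.le_of_mem_convexHull_signedPerms hsym <| hadamard_mulVec_mem_convexHull_signedPerms
    (mul_mem (transpose_mem_unitaryGroup_iff.2 hU) hU₀)
    (mul_mem (transpose_mem_unitaryGroup_iff.2 hV) hV₀) _

/-- If f : ℝ^m → ℝ is convex and absolutely symmetric (invariant under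
permutations and sign changes of coordinates), and X ↦ M(X) is an affine map from
p×q matrices to m×m matrices, then X ↦ f(σ(M(X))) is convex, where σ is the vector
of singular values. -/
theorem stmt5 {m p q : ℕ} (f : (Fin m → ℝ) → ℝ)
    (hf : ConvexOn ℝ Set.univ f)
    (hsym : ∀ (e : Equiv.Perm (Fin m)) (ε : Fin m → ℝ), (∀ i, ε i = 1 ∨ ε i = -1) →
      ∀ x : Fin m → ℝ, f (fun i => ε i * x (e i)) = f x)
    (M : Matrix (Fin p) (Fin q) ℝ → Matrix (Fin m) (Fin m) ℝ)
    (hM : ∀ (X Y : Matrix (Fin p) (Fin q) ℝ) (θ : ℝ),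
      M (θ • X + (1 - θ) • Y) = θ • M X + (1 - θ) • M Y) :
    ConvexOn ℝ Set.univ (fun X => f (svDesc (M X))) := by
  have hdesc (A : Matrix (Fin m) (Fin m) ℝ) : f (svDesc A) = f (svals A) := by
    show f (fun i => svals A (Tuple.sort (svals A) i.rev)) = _
    simpa using hsym (Fin.revPerm.trans (Tuple.sort (svals A))) 1 (fun _ => Or.inl rfl) (svals A)
  refine ⟨convex_univ, fun X _ Y _ a b ha hb hab => ?_⟩
  obtain rfl : b = 1 - a := by linarith
  obtain ⟨U, hU, V, hV, hUV⟩ := exists_svd (M (a • X + (1 - a) • Y))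
  have hsplit : svals (M (a • X + (1 - a) • Y))
      = a • (Uᵀ * M X * V).diag + (1 - a) • (Uᵀ * M Y * V).diag := by
    rw [← diag_diagonal (svals _), ← hUV, hM]
    simp only [mul_add, add_mul, Matrix.mul_smul, Matrix.smul_mul, diag_add, diag_smul]
  calc f (svDesc (M (a • X + (1 - a) • Y)))
      = f (a • (Uᵀ * M X * V).diag + (1 - a) • (Uᵀ * M Y * V).diag) := by rw [hdesc, hsplit]
    _ ≤ a • f (Uᵀ * M X * V).diag + (1 - a) • f (Uᵀ * M Y * V).diag :=
        hf.2 trivial trivial ha hb (by ring)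
    _ ≤ a • f (svals (M X)) + (1 - a) • f (svals (M Y)) := by
        gcongr <;> exact hf.apply_diag_le_apply_svals hsym _ hU hV
    _ = a • f (svDesc (M X)) + (1 - a) • f (svDesc (M Y)) := by rw [hdesc, hdesc]
end

section
/- Hölder's defect formula lower bound: for positive reals 0 < a_m ≤ ... ≤ a₁, the geometric mean satisfies (Π a_i)^{1/m} ≥ ((Σ a_i)/m) · exp(−Var(a/a_m)/2), where Var(z) = (1/m)Σ(z_i − mean(z))² and a/a_m denotes coordinatewise division. -/
/-- Empirical variance of a vector. -/
noncomputable def empVar {k : ℕ} (z : Fin k → ℝ) : ℝ :=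
  (∑ i, (z i - (∑ j, z j) / k) ^ 2) / k

/-!
Both sides are homogeneous of degree one in `a`, so dividing by the smallest entry `a_m` reduces
the claim to vectors `z` with all entries `≥ 1`. For such `z`, with mean `μ ≥ 1`, the
function `x ↦ log x - x / μ + (x - μ) ^ 2 / 2` attains its minimum over `x ≥ 1` at `x = μ`;
summing `log μ - 1 ≤ log z_i - z_i / μ + (z_i - μ) ^ 2 / 2` over `i` gives
`log μ - Var z / 2 ≤ (1 / m) ∑ log z_i`, and exponentiating gives the bound.
-/

open Real Finset

lemma hasDerivAt_log_sub_div_add_sq {t x : ℝ} (ht : t ≠ 0) (hx : x ≠ 0) :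
    HasDerivAt (fun y => log y - y / t + (y - t) ^ 2 / 2)
      ((x - t) * (t * x - 1) / (t * x)) x := by
  refine HasDerivAt.congr_deriv (((hasDerivAt_log hx).sub ((hasDerivAt_id x).div_const t)).add
    ((((hasDerivAt_id x).sub_const t).pow 2).div_const 2)) ?_
  simp only [id]
  field_simp
  ring

lemma log_sub_one_le_log_sub_div_add_sq {t x : ℝ} (ht : 1 ≤ t) (hx : t⁻¹ ≤ x) :
    log t - 1 ≤ log x - x / t + (x - t) ^ 2 / 2 := by
  set φ : ℝ → ℝ := fun y => log y - y / t + (y - t) ^ 2 / 2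
  set φ' : ℝ → ℝ := fun y => (y - t) * (t * y - 1) / (t * y)
  have ht₀ : 0 < t := by linarith
  have htt : t⁻¹ ≤ t := (inv_le_one_of_one_le₀ ht).trans ht
  have hφt : φ t = log t - 1 := by simp [φ, div_self ht₀.ne']
  have hderiv : ∀ y ∈ Set.Ioi 0, HasDerivAt φ (φ' y) y :=
    fun y hy => hasDerivAt_log_sub_div_add_sq ht₀.ne' (ne_of_gt hy)
  have hcont : ContinuousOn φ (Set.Ici t⁻¹) := fun y hy =>
    (hderiv y ((inv_pos.2 ht₀).trans_le hy)).continuousAt.continuousWithinAt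
  rw [← hφt]
  rcases le_total x t with hxt | htx
  · refine antitoneOn_of_hasDerivWithinAt_nonpos (f' := φ') (convex_Icc t⁻¹ t)
      (hcont.mono Set.Icc_subset_Ici_self) (fun y hy => ?_) (fun y hy => ?_)
      ⟨hx, hxt⟩ ⟨htt, le_rfl⟩ hxt
    all_goals rw [interior_Icc] at hy
    · exact (hderiv y ((inv_pos.2 ht₀).trans hy.1)).hasDerivWithinAt
    · have hty : 1 < t * y := by simpa [ht₀.ne'] using mul_lt_mul_of_pos_left hy.1 ht₀
      exact div_nonpos_of_nonpos_of_nonneg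
        (mul_nonpos_of_nonpos_of_nonneg (by linarith [hy.2]) (by linarith)) (by linarith)
  · refine monotoneOn_of_hasDerivWithinAt_nonneg (f' := φ') (convex_Ici t)
      (hcont.mono (Set.Ici_subset_Ici.2 htt)) (fun y hy => ?_) (fun y hy => ?_)
      Set.self_mem_Ici htx htx
    all_goals rw [interior_Ici, Set.mem_Ioi] at hy
    · exact (hderiv y (ht₀.trans hy)).hasDerivWithinAt
    · have hty : 1 < t * y := by nlinarith
      exact div_nonneg (mul_nonneg (by linarith) (by linarith)) (by linarith)

lemma log_mean_sub_empVar_le {k : ℕ} (hk : 0 < k) (z : Fin k → ℝ) (hz : ∀ i, 1 ≤ z i) :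
    log ((∑ i, z i) / k) - empVar z / 2 ≤ (∑ i, log (z i)) / k := by
  set μ := (∑ i, z i) / k with hμ
  have hk' : (0 : ℝ) < k := Nat.cast_pos.2 hk
  have hμ₁ : 1 ≤ μ := by
    rw [hμ, le_div_iff₀ hk']
    simpa using sum_le_sum fun i (_ : i ∈ univ) => hz i
  have hpointwise : ∀ i, log μ - 1 ≤ log (z i) - z i / μ + (z i - μ) ^ 2 / 2 := fun i =>
    log_sub_one_le_log_sub_div_add_sq hμ₁ ((inv_le_one_of_one_le₀ hμ₁).trans (hz i))
  have hsum := sum_le_sum fun i (_ : i ∈ univ) => hpointwise i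
  have hzμ : (∑ i, z i) / μ = k := by
    rw [show ∑ i, z i = μ * k by rw [hμ]; field_simp, mul_div_cancel_left₀ _ (by positivity)]
  simp only [sum_add_distrib, sum_sub_distrib, ← sum_div, sum_const, card_univ,
    Fintype.card_fin, nsmul_eq_mul] at hsum
  rw [hzμ] at hsum
  have hvar : empVar z / 2 * k = (∑ i, (z i - μ) ^ 2) / 2 := by
    rw [empVar, ← hμ]
    field_simp
  rw [le_div_iff₀ hk', sub_mul, hvar]
  linarith

lemma mean_mul_exp_neg_empVar_le_geomMean {k : ℕ} (hk : 0 < k) (z : Fin k → ℝ)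
    (hz : ∀ i, 1 ≤ z i) :
    (∑ i, z i) / k * exp (-empVar z / 2) ≤ (∏ i, z i) ^ ((1 : ℝ) / k) := by
  have hz₀ : ∀ i, 0 < z i := fun i => one_pos.trans_le (hz i)
  have hmean : 0 < (∑ i, z i) / k :=
    div_pos (sum_pos (fun i _ => hz₀ i) ⟨⟨0, hk⟩, mem_univ _⟩) (Nat.cast_pos.2 hk)
  rw [rpow_def_of_pos (prod_pos fun i _ => hz₀ i), log_prod fun i _ => (hz₀ i).ne',
    ← exp_log hmean, ← exp_add, exp_le_exp, mul_one_div]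
  linarith [log_mean_sub_empVar_le hk z hz]

lemma prod_const_mul_rpow_one_div {k : ℕ} (hk : k ≠ 0) {c : ℝ} (hc : 0 ≤ c)
    (z : Fin k → ℝ) (hz : ∀ i, 0 ≤ z i) :
    (∏ i, c * z i) ^ ((1 : ℝ) / k) = c * (∏ i, z i) ^ ((1 : ℝ) / k) := by
  rw [prod_mul_distrib, prod_const, card_univ, Fintype.card_fin,
    mul_rpow (pow_nonneg hc k) (prod_nonneg fun i _ => hz i), one_div,
    pow_rpow_inv_natCast hc hk]

/-- Hölder defect lower bound: for positive reals a₁ ≥ ... ≥ a_m > 0,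
(Π a_i)^{1/m} ≥ ((Σ a_i)/m) · exp(−Var(a/a_m)/2), where a_m is the smallest entry. -/
theorem stmt6 {m : ℕ} (hm : 0 < m) (a : Fin m → ℝ) (hpos : ∀ i, 0 < a i)
    (hsorted : Antitone a) :
    ((∑ i, a i) / m) * Real.exp (-(empVar (fun i => a i / a ⟨m - 1, by omega⟩)) / 2) ≤
      (∏ i, a i) ^ ((1 : ℝ) / m) := by
  set c := a ⟨m - 1, by omega⟩
  set b : Fin m → ℝ := fun i => a i / c
  have hc : 0 < c := hpos _
  have hb : ∀ i, 1 ≤ b i := fun i =>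
    (one_le_div hc).2 (hsorted (Fin.le_def.2 (by simp only; omega)))
  have ha : ∀ i, a i = c * b i := fun i => (mul_div_cancel₀ _ hc.ne').symm
  calc (∑ i, a i) / m * exp (-empVar b / 2)
      = c * ((∑ i, b i) / m * exp (-empVar b / 2)) := by
        simp only [ha, ← mul_sum]
        ring
    _ ≤ c * (∏ i, b i) ^ ((1 : ℝ) / m) :=
        mul_le_mul_of_nonneg_left (mean_mul_exp_neg_empVar_le_geomMean hm b hb) hc.le
    _ = (∏ i, a i) ^ ((1 : ℝ) / m) := by
        simp only [ha]
        exact (prod_const_mul_rpow_one_div hm.ne' hc.le b fun i => zero_le_one.trans (hb i)).symm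
end

section
/- Hölder's defect formula upper bound: for positive reals 0 < a_m ≤ ... ≤ a₁, the geometric mean satisfies (Π a_i)^{1/m} ≤ ((Σ a_i)/m) · exp(−Var(a/a₁)/2), where Var(z) = (1/m)Σ(z_i − mean(z))². -/
/-!
On `(0, 1]` the function `y ↦ log y + y ^ 2 / 2` is concave, its second derivative being
`1 - 1 / y ^ 2 ≤ 0`. Jensen's inequality for it, applied to `b = a / a₁ ∈ (0, 1]ᵐ` with equal
weights, reads `mean (log b) + mean (b ^ 2) / 2 ≤ log (mean b) + (mean b) ^ 2 / 2`, i.e.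
`mean (log b) ≤ log (mean b) - Var b / 2`. Exponentiating gives the claim for `b`, and both sides
scale linearly in `a`.
-/

open Real Set

theorem concaveOn_log_add_sq_div_two :
    ConcaveOn ℝ (Ioc 0 1) (fun y ↦ log y + y ^ 2 / 2) := by
  refine concaveOn_of_hasDerivWithinAt2_nonpos (f' := fun y ↦ y⁻¹ + y)
    (f'' := fun y ↦ -(y ^ 2)⁻¹ + 1) (convex_Ioc 0 1) ?_ ?_ ?_ ?_
  · exact ContinuousOn.add (continuousOn_log.mono fun y hy ↦ hy.1.ne') (by fun_prop)
  · rw [interior_Ioc]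
    intro y hy
    have := (hasDerivAt_log hy.1.ne').add ((hasDerivAt_pow 2 y).div_const 2)
    exact (this.congr_deriv (by ring)).hasDerivWithinAt
  · rw [interior_Ioc]
    intro y hy
    exact ((hasDerivAt_inv hy.1.ne').add (hasDerivAt_id y)).hasDerivWithinAt
  · rw [interior_Ioc]
    intro y hy
    have : 1 ≤ (y ^ 2)⁻¹ := (one_le_inv₀ (pow_pos hy.1 2)).mpr (by nlinarith [hy.1, hy.2])
    linarith

theorem empVar_eq_sum_sq_div_sub_sq {k : ℕ} (z : Fin k → ℝ) :
    empVar z = (∑ i, z i ^ 2) / k - ((∑ i, z i) / k) ^ 2 := by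
  rcases k.eq_zero_or_pos with rfl | hk
  · simp [empVar]
  have hk' : (k : ℝ) ≠ 0 := by positivity
  simp only [empVar, sub_sq, Finset.sum_add_distrib, Finset.sum_sub_distrib, ← Finset.sum_mul,
    Finset.sum_const, Finset.card_univ, Fintype.card_fin, nsmul_eq_mul, mul_assoc, ← Finset.mul_sum]
  field_simp
  ring

theorem sum_log_div_le_of_mem_Ioc {m : ℕ} (hm : 0 < m) (b : Fin m → ℝ)
    (hb : ∀ i, b i ∈ Ioc 0 1) :
    (∑ i, log (b i)) / m ≤ log ((∑ i, b i) / m) - empVar b / 2 := by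
  have hm' : (0 : ℝ) < m := by positivity
  have jensen := concaveOn_log_add_sq_div_two.le_map_sum (t := Finset.univ)
    (w := fun _ ↦ (m : ℝ)⁻¹) (p := b) (fun _ _ ↦ by positivity) (by simp [hm'.ne'])
    (fun i _ ↦ hb i)
  simp only [smul_eq_mul, ← Finset.mul_sum, Finset.sum_add_distrib, ← Finset.sum_div] at jensen
  rw [empVar_eq_sum_sq_div_sub_sq]
  field_simp at jensen ⊢
  linarith

theorem geomMean_le_mean_mul_exp_neg_empVar_div {m : ℕ} (hm : 0 < m) (a : Fin m → ℝ) {c : ℝ}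
    (hpos : ∀ i, 0 < a i) (hle : ∀ i, a i ≤ c) :
    (∏ i, a i) ^ ((1 : ℝ) / m) ≤
      ((∑ i, a i) / m) * exp (-(empVar fun i ↦ a i / c) / 2) := by
  have hm' : (0 : ℝ) < m := by positivity
  have hc : 0 < c := (hpos ⟨0, hm⟩).trans_le (hle _)
  have hb : ∀ i, a i / c ∈ Ioc 0 1 := fun i ↦
    ⟨div_pos (hpos i) hc, div_le_one_of_le₀ (hle i) hc.le⟩
  have hlog : ∀ i, log (a i) = log (a i / c) + log c := fun i ↦ by
    rw [log_div (hpos i).ne' hc.ne', sub_add_cancel]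
  have hmean : (∑ i, a i) / m = c * ((∑ i, a i / c) / m) := by
    rw [← Finset.sum_div, mul_div_assoc', mul_div_assoc', mul_div_cancel_left₀ _ hc.ne']
  have hmean_pos : 0 < (∑ i, a i / c) / m :=
    div_pos (Finset.sum_pos (fun i _ ↦ (hb i).1) ⟨⟨0, hm⟩, Finset.mem_univ _⟩) hm'
  have key := sum_log_div_le_of_mem_Ioc hm _ hb
  rw [rpow_def_of_pos (Finset.prod_pos fun i _ ↦ hpos i), log_prod fun i _ ↦ (hpos i).ne',
    ← exp_log (hmean ▸ mul_pos hc hmean_pos : 0 < (∑ i, a i) / m), ← exp_add, exp_le_exp,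
    hmean, log_mul hc.ne' hmean_pos.ne']
  simp only [hlog, Finset.sum_add_distrib, Finset.sum_const, Finset.card_univ, Fintype.card_fin,
    nsmul_eq_mul]
  field_simp at key ⊢
  linarith

/-- Hölder defect upper bound: for positive reals a₁ ≥ ... ≥ a_m > 0,
(Π a_i)^{1/m} ≤ ((Σ a_i)/m) · exp(−Var(a/a₁)/2), where a₁ is the largest entry. -/
theorem stmt7 {m : ℕ} (hm : 0 < m) (a : Fin m → ℝ) (hpos : ∀ i, 0 < a i)
    (hsorted : Antitone a) :
    (∏ i, a i) ^ ((1 : ℝ) / m) ≤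
      ((∑ i, a i) / m) * Real.exp (-(empVar (fun i => a i / a ⟨0, hm⟩)) / 2) :=
  geomMean_le_mean_mul_exp_neg_empVar_div hm a hpos fun i ↦
    hsorted (Fin.mk_le_of_le_val i.val.zero_le)
end
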